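/- For every even d = 2m ≥ 2 and every l ∈ [0,1], the (d-1)-dimensional volume of the polytope D_d(l) (the projection onto the hyperplane x_d = 0 of {(x_1,...,x_d) : 1 ≥ x_1 ≥ x_2 ≥ ... ≥ x_d ≥ 0, Σ_{j=1}^d (-1)^{j-1} x_j = l}) equals (1/d!)·(1/B(m, m+1))·l^{m-1}(1-l)^m. -/

import Mathlib

/-!
Add the values `x₀ = 1` and `x_{d+1} = 0` and look at the gaps `zⱼ = xⱼ - x_{j+1}`,
`0 ≤ j ≤ d`. A point of the polytope is the same as a nonnegative gap vector with total sum
`1` whose odd-indexed gaps (the pairs `x_{2i-1} - x_{2i}` of the alternating sum) sum to `l`.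
Forgetting `x_d` forgets exactly the last odd gap and the last even gap, so in gap
coordinates `D_{2m}(l)` is the product of the simplex `{Σ ≤ l}` on the remaining `m - 1` odd
gaps and the simplex `{Σ ≤ 1 - l}` on the `m` even gaps. The gap map is affine with unipotent
linear part, hence preserves volume, and the volume is `l^(m-1) / (m-1)! * (1-l)^m / m!`.
-/

open MeasureTheory

/-- `Dset d l` is the orthogonal projection onto the hyperplane `x_d = 0`
(i.e. onto the first `d - 1` coordinates) of the polytope
`{x ∈ ℝ^d : 1 ≥ x₁ ≥ x₂ ≥ … ≥ x_d ≥ 0, ∑ (-1)^(j-1) x_j = l}`. -/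
def Dset (d : ℕ) (l : ℝ) : Set (Fin (d - 1) → ℝ) :=
  {y | ∃ x : Fin d → ℝ, Antitone x ∧ (∀ j, 0 ≤ x j ∧ x j ≤ 1) ∧
    (∑ j : Fin d, (-1 : ℝ) ^ (j : ℕ) * x j) = l ∧
    ∀ i : Fin (d - 1), y i = x (Fin.castLE (Nat.sub_le d 1) i)}

open Finset Matrix

def cornerSimplex (n : ℕ) (t : ℝ) : Set (Fin n → ℝ) :=
  {x | (∀ i, 0 ≤ x i) ∧ ∑ i, x i ≤ t}

lemma measurableSet_cornerSimplex (n : ℕ) (t : ℝ) : MeasurableSet (cornerSimplex n t) := by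
  simp only [cornerSimplex, Set.ofPred_and, Set.ofPred_forall]
  exact (MeasurableSet.iInter fun i =>
    measurableSet_le measurable_const (measurable_pi_apply i)).inter
      (measurableSet_le (by fun_prop) measurable_const)

lemma cornerSimplex_eq_empty {n : ℕ} {t : ℝ} (ht : t < 0) : cornerSimplex n t = ∅ :=
  Set.eq_empty_of_forall_notMem fun _ ⟨hx, hsum⟩ => by
    linarith [Finset.sum_nonneg fun i (_ : i ∈ univ) => hx i]

lemma mem_cornerSimplex_succ_iff {n : ℕ} {t : ℝ} {x : Fin (n + 1) → ℝ} :
    x ∈ cornerSimplex (n + 1) t ↔ 0 ≤ x 0 ∧ Fin.tail x ∈ cornerSimplex n (t - x 0) := by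
  simp only [cornerSimplex, Set.mem_ofPred_eq, Fin.forall_fin_succ, Fin.sum_univ_succ, Fin.tail,
    le_sub_iff_add_le', and_assoc]

lemma lintegral_Icc_sub_pow_div_factorial (n : ℕ) {t : ℝ} (ht : 0 ≤ t) :
    ∫⁻ a in Set.Icc 0 t, ENNReal.ofReal ((t - a) ^ n / n.factorial) =
      ENNReal.ofReal (t ^ (n + 1) / (n + 1).factorial) := by
  rw [← ofReal_integral_eq_lintegral_ofReal, integral_Icc_eq_integral_Ioc,
    ← intervalIntegral.integral_of_le ht,
    intervalIntegral.integral_comp_sub_left (fun x => x ^ n / (n.factorial : ℝ)),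
    intervalIntegral.integral_div, integral_pow]
  · rw [sub_self, sub_zero, zero_pow n.succ_ne_zero, sub_zero, Nat.factorial_succ]
    push_cast
    field_simp
  · exact (by fun_prop : Continuous fun a : ℝ => (t - a) ^ n / n.factorial).integrableOn_Icc
  · filter_upwards [ae_restrict_mem measurableSet_Icc] with a ha
    have : 0 ≤ t - a := sub_nonneg.2 ha.2
    positivity

theorem volume_cornerSimplex (n : ℕ) {t : ℝ} (ht : 0 ≤ t) :
    volume (cornerSimplex n t) = ENNReal.ofReal (t ^ n / n.factorial) := by
  induction n generalizing t with
  | zero => simp [cornerSimplex, ht, volume_pi]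
  | succ n ih =>
    let e := MeasurableEquiv.piFinSuccAbove (fun _ : Fin (n + 1) => ℝ) 0
    let T : Set (ℝ × (Fin n → ℝ)) := {p | 0 ≤ p.1 ∧ p.2 ∈ cornerSimplex n (t - p.1)}
    have hpre : cornerSimplex (n + 1) t = e ⁻¹' T := by
      ext x
      exact mem_cornerSimplex_succ_iff
    have hT : MeasurableSet T := by
      rw [← e.symm_preimage_preimage T, ← hpre]
      exact e.symm.measurable (measurableSet_cornerSimplex _ _)
    have hslice : ∀ a, volume (Prod.mk a ⁻¹' T) =
        (Set.Icc 0 t).indicator (fun a => ENNReal.ofReal ((t - a) ^ n / n.factorial)) a := by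
      intro a
      by_cases ha : a ∈ Set.Icc 0 t
      · have : Prod.mk a ⁻¹' T = cornerSimplex n (t - a) := by
          ext y
          simp [T, ha.1]
        rw [Set.indicator_of_mem ha, this, ih (sub_nonneg.2 ha.2)]
      · have : Prod.mk a ⁻¹' T = ∅ :=
          Set.eq_empty_of_forall_notMem fun y ⟨h0, hy⟩ => by
            rw [cornerSimplex_eq_empty (by simp_all)] at hy
            exact hy
        rw [Set.indicator_of_notMem ha, this, measure_empty]
    rw [hpre, (volume_preserving_piFinSuccAbove _ 0).measure_preimage_equiv,
      Measure.volume_eq_prod, Measure.prod_apply hT]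
    simp_rw [hslice]
    rw [lintegral_indicator measurableSet_Icc, lintegral_Icc_sub_pow_div_factorial n ht]

section Gaps

variable {n : ℕ}

def subdiagonalShift (n : ℕ) : Matrix (Fin n) (Fin n) ℝ :=
  Matrix.of fun i j => if (i : ℕ) = j + 1 then 1 else 0

lemma det_one_sub_subdiagonalShift : (1 - subdiagonalShift n).det = 1 := by
  rw [det_of_isLowerTriangular]
  · simp [subdiagonalShift]
  · intro i j hij
    have : (i : ℕ) < j := by simpa using hij
    simp [subdiagonalShift, one_apply_ne (Fin.ne_of_lt this), show (i : ℕ) ≠ j + 1 by omega]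

def gaps (y : Fin (n + 1) → ℝ) : Fin (n + 1) → ℝ := fun i => vecCons 1 y i.castSucc - y i

lemma gaps_zero (y : Fin (n + 1) → ℝ) : gaps y 0 = 1 - y 0 := by
  simp [gaps]

lemma gaps_succ (y : Fin (n + 1) → ℝ) (i : Fin n) :
    gaps y i.succ = y i.castSucc - y i.succ := by
  simp [gaps]

lemma gaps_eq_mulVec (y : Fin (n + 1) → ℝ) :
    gaps y = (1 - subdiagonalShift (n + 1)) *ᵥ (1 - y) := by
  ext i
  rw [sub_mulVec, one_mulVec, Pi.sub_apply]
  cases i using Fin.cases with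
  | zero => simp [gaps_zero, subdiagonalShift, mulVec, dotProduct]
  | succ j =>
    have hj : ∀ x : Fin (n + 1), ((j : ℕ) = x ↔ x = j.castSucc) := fun x => by
      rw [Fin.ext_iff, Fin.val_castSucc, eq_comm]
    simp [gaps_succ, subdiagonalShift, mulVec, dotProduct, hj]

theorem volume_preimage_gaps (s : Set (Fin (n + 1) → ℝ)) :
    volume (gaps ⁻¹' s) = volume s := by
  set L := toLin' (1 - subdiagonalShift (n + 1))
  have hdet : LinearMap.det L = 1 := by rw [LinearMap.det_toLin', det_one_sub_subdiagonalShift]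
  have : gaps ⁻¹' s = MeasurableEquiv.subLeft 1 ⁻¹' (L ⁻¹' s) := by
    ext y
    simp only [Set.mem_preimage, L, toLin'_apply, gaps_eq_mulVec]
    rfl
  have hsub : MeasurePreserving (MeasurableEquiv.subLeft (1 : Fin (n + 1) → ℝ)) :=
    Measure.measurePreserving_sub_left volume 1
  rw [this, hsub.measure_preimage_equiv (L ⁻¹' s),
    Measure.addHaar_preimage_linearMap _ (by simp [hdet]), hdet]
  simp

lemma antitone_vecCons_one_iff (y : Fin (n + 1) → ℝ) :
    Antitone (vecCons 1 y) ↔ ∀ i, 0 ≤ gaps y i := by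
  simp only [Fin.antitone_iff_succ_le, gaps, sub_nonneg, cons_val_succ]

lemma sum_gaps (y : Fin (n + 1) → ℝ) : ∑ i, gaps y i = 1 - y (Fin.last n) := by
  have h := Fin.sum_Iic_sub (Fin.last n) (vecCons 1 y)
  rw [← Fin.top_eq_last, Finset.Iic_top, Fin.top_eq_last] at h
  simp only [cons_val_succ, cons_val_zero] at h
  rw [← neg_sub, ← h, ← Finset.sum_neg_distrib]
  simp [gaps]

end Gaps

lemma sum_range_two_mul_add_one_neg_one_pow_mul {R : Type*} [CommRing R] (f : ℕ → R) (k : ℕ) :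
    ∑ t ∈ range (2 * k + 1), (-1) ^ t * f t =
      ∑ s ∈ range k, (f (2 * s) - f (2 * s + 1)) + f (2 * k) := by
  induction k with
  | zero => simp
  | succ k ih =>
    have hodd : (-1 : R) ^ (2 * k + 1) = -1 := by simp [pow_succ, pow_mul]
    rw [show 2 * (k + 1) + 1 = 2 * k + 1 + 1 + 1 by ring, sum_range_succ, sum_range_succ, ih,
      sum_range_succ, pow_succ _ (2 * k + 1), hodd, show 2 * (k + 1) = 2 * k + 1 + 1 by ring]
    ring

def altSum {n : ℕ} (x : Fin n → ℝ) : ℝ := ∑ j : Fin n, (-1 : ℝ) ^ (j : ℕ) * x j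

lemma altSum_eq_altSum_init_sub {n : ℕ} (hn : Even n) (x : Fin (n + 2) → ℝ) :
    altSum x = altSum (Fin.init x) - x (Fin.last _) := by
  simp [altSum, Fin.sum_univ_castSucc, Fin.init, pow_succ, hn.neg_one_pow, sub_eq_add_neg]

lemma antitone_snoc {α : Type*} [Preorder α] {n : ℕ} {f : Fin (n + 1) → α} {a : α}
    (hf : Antitone f) (ha : a ≤ f (Fin.last n)) :
    Antitone (Fin.snoc f a : Fin (n + 2) → α) := by
  refine Fin.antitone_iff_succ_le.2 fun i => ?_
  cases i using Fin.lastCases with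
  | last => simpa using ha
  | cast j =>
    rw [Fin.succ_castSucc, Fin.snoc_castSucc, Fin.snoc_castSucc]
    exact hf (Fin.castSucc_le_succ j)

-- The coordinate forgotten by the projection is forced to be `altSum y - l`.
lemma mem_Dset_iff {n : ℕ} (hn : Even n) (l : ℝ) (y : Fin (n + 1) → ℝ) :
    y ∈ Dset (n + 2) l ↔
      Antitone (vecCons 1 y) ∧ 0 ≤ altSum y - l ∧ altSum y - l ≤ y (Fin.last n) := by
  constructor
  · rintro ⟨x, hx, hbd, hsum, hy⟩
    obtain rfl : y = Fin.init x := funext hy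
    have hlast : altSum (Fin.init x) - l = x (Fin.last _) := by
      linarith [altSum_eq_altSum_init_sub hn x, show altSum x = l from hsum]
    rw [hlast]
    exact ⟨antitone_vecCons.2 ⟨(hbd 0).2, hx.comp_monotone Fin.strictMono_castSucc.monotone⟩,
      (hbd _).1, hx (Fin.le_last _)⟩
  · rintro ⟨hw, h0, hlast⟩
    obtain ⟨hy0, hy⟩ := antitone_vecCons.1 hw
    have hx := antitone_snoc hy hlast
    refine ⟨Fin.snoc y (altSum y - l), hx, fun j => ⟨?_, ?_⟩, ?_, fun i => ?_⟩
    · have := hx (Fin.le_last j)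
      rw [Fin.snoc_last] at this
      linarith
    · have := hx (Fin.zero_le j)
      rw [← Fin.castSucc_zero, Fin.snoc_castSucc] at this
      linarith
    · have := altSum_eq_altSum_init_sub hn (Fin.snoc y (altSum y - l))
      rw [Fin.init_snoc, Fin.snoc_last] at this
      change altSum _ = l
      linarith
    · exact (Fin.snoc_castSucc (α := fun _ => ℝ) _ _ i).symm

noncomputable def evenOddEquiv (k : ℕ) : Fin (k + 1) ⊕ Fin k ≃ Fin (2 * k + 1) :=
  Equiv.ofBijective
    (Sum.elim (fun s => ⟨2 * s, by omega⟩) (fun s => ⟨2 * s + 1, by omega⟩))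
    ((Fintype.bijective_iff_injective_and_card _).2
      ⟨by rintro (a | a) (b | b) h <;> simp [Fin.ext_iff] at h ⊢ <;> omega, by simp; ring⟩)

noncomputable def evenOddSplit (k : ℕ) :
    (Fin (2 * k + 1) → ℝ) ≃ᵐ (Fin (k + 1) → ℝ) × (Fin k → ℝ) :=
  (MeasurableEquiv.arrowCongr' (evenOddEquiv k).symm (MeasurableEquiv.refl ℝ)).trans
    (MeasurableEquiv.sumPiEquivProdPi fun _ => ℝ)

lemma evenOddSplit_apply (k : ℕ) (z : Fin (2 * k + 1) → ℝ) :
    evenOddSplit k z =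
      (fun s => z (evenOddEquiv k (.inl s)), fun s => z (evenOddEquiv k (.inr s))) :=
  rfl

lemma measurePreserving_evenOddSplit (k : ℕ) : MeasurePreserving (evenOddSplit k) :=
  (volume_measurePreserving_sumPiEquivProdPi _).comp
    (volume_preserving_arrowCongr' _ _ (MeasurePreserving.id volume))

lemma sum_gaps_odd (k : ℕ) (y : Fin (2 * k + 1) → ℝ) :
    ∑ s, gaps y (evenOddEquiv k (.inr s)) = altSum y - y (Fin.last (2 * k)) := by
  set Y : ℕ → ℝ := fun t => if h : t < 2 * k + 1 then y ⟨t, h⟩ else 0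
  have hY : ∀ j : Fin (2 * k + 1), y j = Y j := fun j => by simp only [Y, dif_pos j.2]
  have hodd : ∀ s : Fin k, gaps y (evenOddEquiv k (.inr s)) = Y (2 * s) - Y (2 * s + 1) := by
    intro s
    rw [show evenOddEquiv k (.inr s) = Fin.succ ⟨2 * s, by omega⟩ from rfl, gaps_succ, hY, hY]
    rfl
  simp only [altSum, Fintype.sum_congr _ _ hodd, hY]
  rw [Fin.sum_univ_eq_sum_range (fun s => Y (2 * s) - Y (2 * s + 1)),
    Fin.sum_univ_eq_sum_range (fun t => (-1) ^ t * Y t), sum_range_two_mul_add_one_neg_one_pow_mul]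
  simp

lemma Dset_eq_preimage (k : ℕ) (l : ℝ) :
    Dset (2 * k + 2) l =
      gaps ⁻¹' (evenOddSplit k ⁻¹'
        (cornerSimplex (k + 1) (1 - l) ×ˢ cornerSimplex k l)) := by
  ext y
  rw [mem_Dset_iff (even_two_mul k), antitone_vecCons_one_iff]
  simp only [Set.mem_preimage, Set.mem_prod, evenOddSplit_apply, cornerSimplex, Set.mem_ofPred_eq]
  rw [← (evenOddEquiv k).forall_congr_right, Sum.forall]
  have hsum := sum_gaps y
  rw [← (evenOddEquiv k).sum_comp, Fintype.sum_sum_type] at hsum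
  have hodd := sum_gaps_odd k y
  constructor
  · rintro ⟨⟨h1, h2⟩, h3, h4⟩
    exact ⟨⟨h1, by linarith⟩, h2, by linarith⟩
  · rintro ⟨⟨h1, h3⟩, h2, h4⟩
    exact ⟨⟨h1, h2⟩, by linarith, by linarith⟩

theorem stmt_5 (m : ℕ) (hm : 1 ≤ m) (l : ℝ) (hl : l ∈ Set.Icc (0:ℝ) 1) :
    volume (Dset (2 * m) l) =
      ENNReal.ofReal
        ((1 / ((2 * m).factorial : ℝ)) *
          (((2 * m).factorial : ℝ) / ((m - 1).factorial * m.factorial)) *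
          l ^ (m - 1) * (1 - l) ^ m) := by
  obtain ⟨k, rfl⟩ : ∃ k, m = k + 1 := ⟨m - 1, by omega⟩
  obtain ⟨hl0, hl1⟩ := hl
  rw [show 2 * (k + 1) = 2 * k + 2 by ring, Dset_eq_preimage, volume_preimage_gaps,
    (measurePreserving_evenOddSplit k).measure_preimage_equiv, Measure.volume_eq_prod,
    Measure.prod_prod, volume_cornerSimplex _ (sub_nonneg.2 hl1), volume_cornerSimplex _ hl0,
    ← ENNReal.ofReal_mul (by positivity)]
  congr 1
  simp only [Nat.add_sub_cancel]
  field_simp
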